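/- Let G=(V,E) be a finite connected simple graph, let x ∈ V, and let y ∈ V with y ∉ N(x) ∪ {x}. Then d_{G/x}(x,y) ≤ d_G(x,y) − 1. -/

import Mathlib

open SimpleGraph

noncomputable def eccentr {V : Type} (G : SimpleGraph V) (x : V) : ℕ :=
  sSup (Set.range (G.dist x))

noncomputable def grRadius {V : Type} (G : SimpleGraph V) : ℕ :=
  sInf (Set.range (eccentr G))

def ncontract {V : Type} (G : SimpleGraph V) (x : V) :
    SimpleGraph {v : V // ¬ G.Adj x v} where
  Adj a b := G.Adj a.1 b.1 ∨
    (a.1 = x ∧ b.1 ≠ x ∧ ∃ y, G.Adj x y ∧ G.Adj y b.1) ∨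
    (b.1 = x ∧ a.1 ≠ x ∧ ∃ y, G.Adj x y ∧ G.Adj y a.1)
  symm := ⟨fun a b h => by
    rcases h with h | h | h
    · exact Or.inl h.symm
    · exact Or.inr (Or.inr h)
    · exact Or.inr (Or.inl h)⟩
  loopless := ⟨fun a h => by
    rcases h with h | ⟨h1, h2, -⟩ | ⟨h1, h2, -⟩
    · exact G.loopless.irrefl _ h
    · exact h2 h1
    · exact h2 h1⟩

namespace SimpleGraph

variable {V : Type} (G : SimpleGraph V)

lemma exists_adj_dist_eq_of_dist_eq_succ {u v : V} {n : ℕ} (h : G.dist u v = n + 1) :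
    ∃ w, G.Adj w v ∧ G.dist u w = n := by
  obtain ⟨p, hp⟩ : ∃ p : G.Walk u v, p.length = G.dist u v :=
    exists_walk_of_dist_ne_zero (by omega)
  have hp_not_nil : ¬ p.Nil := by
    rw [← Walk.length_eq_zero_iff]
    omega
  have hadj := p.adj_penultimate hp_not_nil
  refine ⟨p.penultimate, hadj, le_antisymm ?_ ?_⟩
  · have := dist_le p.dropLast
    have := Walk.length_dropLast_add_one hp_not_nil
    omega
  · have := hadj.reachable.dist_triangle_right u
    rw [dist_eq_one_iff_adj.mpr hadj] at this
    omega

variable {G} {x : V}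

lemma ncontract_adj_of_adj {a b : {v : V // ¬ G.Adj x v}} (h : G.Adj a.1 b.1) :
    (ncontract G x).Adj a b :=
  Or.inl h

lemma ncontract_adj_center_of_adj_adj {w a : V} (hxw : G.Adj x w) (hwa : G.Adj w a)
    (hax : a ≠ x) (hxa : ¬ G.Adj x a) :
    (ncontract G x).Adj ⟨x, G.loopless.irrefl x⟩ ⟨a, hxa⟩ :=
  Or.inr (Or.inl ⟨rfl, hax, w, hxw, hwa⟩)

/-- Strip the last edge of a geodesic from `x` to `a`; when only `x — b — a` is left, those two
edges merge into one edge of `ncontract G x`. -/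
lemma exists_ncontract_walk_length_le (n : ℕ) {a : V} (hxa : ¬ G.Adj x a)
    (hdist : G.dist x a = n + 2) :
    ∃ p : (ncontract G x).Walk ⟨x, G.loopless.irrefl x⟩ ⟨a, hxa⟩, p.length ≤ n + 1 := by
  have hax : a ≠ x := by
    rintro rfl
    simp at hdist
  obtain ⟨b, hba, hdist_b⟩ := G.exists_adj_dist_eq_of_dist_eq_succ hdist
  cases n with
  | zero =>
    have hxb : G.Adj x b := dist_eq_one_iff_adj.mp hdist_b
    exact ⟨(ncontract_adj_center_of_adj_adj hxb hba hax hxa).toWalk, le_rfl⟩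
  | succ n =>
    have hxb : ¬ G.Adj x b := fun h => by
      rw [dist_eq_one_iff_adj.mpr h] at hdist_b
      omega
    obtain ⟨p, hp⟩ := exists_ncontract_walk_length_le n hxb hdist_b
    refine ⟨p.concat (ncontract_adj_of_adj (b := ⟨a, hxa⟩) hba), ?_⟩
    rw [Walk.length_concat]
    omega

end SimpleGraph

theorem stmt_7 {V : Type} (G : SimpleGraph V) (hconn : G.Connected)
    (x y : V) (hy : ¬ G.Adj x y) (hxy : y ≠ x) :
    (ncontract G x).dist ⟨x, G.loopless.irrefl x⟩ ⟨y, hy⟩ + 1 ≤ G.dist x y := by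
  obtain ⟨n, hn⟩ : ∃ n, G.dist x y = n + 2 :=
    ⟨G.dist x y - 2, by have := hconn.one_lt_dist_of_ne_of_not_adj hxy.symm hy; omega⟩
  obtain ⟨p, hp⟩ := exists_ncontract_walk_length_le n hy hn
  have := dist_le p
  omega
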